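/- Let M be a smooth manifold. In the complex Ω*(ℝ × M), every form decomposes uniquely as ω = α + β ∧ dt where α and β contain no dt. Define ∇ : Ω*(M) → Ω^{*+1}_c-direction(ℝ × M) by ∇(β) = f dt ∧ β where f ∈ C^∞_c(ℝ) has ∫_ℝ f = 1, and Δ(α + β ∧ dt) = ∫_{-∞}^{∞} β(s) ds (for forms with compact support in the ℝ-direction). Then Δ ∘ ∇ = ± Id, and for every compactly supported closed form ω = α + β∧dt, the form η = (∫_{-∞}^t f(s)ds)(∫_t^∞ β(s)∧ds) − (∫_t^∞ f(s)ds)(∫_{-∞}^t β(s)∧ds) satisfies dη = (∇∘Δ)(ω) − ω, so ∇ and Δ are inverse quasi-isomorphisms on compactly supported cohomology. -/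

import Mathlib

set_option synthInstance.maxHeartbeats 1000000
set_option maxHeartbeats 1000000


noncomputable section

open MeasureTheory
open Set Filter Topology

namespace Stmt8Aux

variable {F : Type*} [NormedAddCommGroup F] [NormedSpace ℝ F]

lemma sliceEmbedding (x : F) : Topology.IsClosedEmbedding (fun s : ℝ => (s, x)) :=
  (Isometry.of_dist_eq fun a b => by
    simp [Prod.dist_eq, dist_nonneg]).isClosedEmbedding

lemma slice_hcs {g : ℝ × F → ℝ} (hgc : HasCompactSupport g) (x : F) :
    HasCompactSupport fun s => g (s, x) :=
  hgc.comp_isClosedEmbedding (sliceEmbedding x)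

lemma slice_cont {g : ℝ × F → ℝ} (hg : Continuous g) (x : F) :
    Continuous fun s => g (s, x) :=
  hg.comp (continuous_id.prodMk continuous_const)

lemma slice_integrable {g : ℝ × F → ℝ} (hg : Continuous g) (hgc : HasCompactSupport g) (x : F) :
    Integrable fun s => g (s, x) :=
  (slice_cont hg x).integrable_of_hasCompactSupport (slice_hcs hgc x)

/-- Partial derivative of `g` in the `F` direction. -/
def pd (g : ℝ × F → ℝ) (s : ℝ) (x : F) : F →L[ℝ] ℝ :=
  (fderiv ℝ g (s, x)).comp (ContinuousLinearMap.inr ℝ ℝ F)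

lemma hasFDerivAt_slice {g : ℝ × F → ℝ} (hg : ContDiff ℝ (⊤ : ℕ∞) g) (s : ℝ) (x : F) :
    HasFDerivAt (fun y => g (s, y)) (pd g s x) x :=
  (hg.differentiable (by simp) (s, x)).hasFDerivAt.comp x (hasFDerivAt_prodMk_right s x)

lemma pd_cont {g : ℝ × F → ℝ} (hg : ContDiff ℝ (⊤ : ℕ∞) g) (x : F) :
    Continuous fun s => pd g s x := by
  have h1 : Continuous (fderiv ℝ g) := hg.continuous_fderiv (by simp)
  exact ((ContinuousLinearMap.compL ℝ F (ℝ × F) ℝ).flip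
    (ContinuousLinearMap.inr ℝ ℝ F)).continuous.comp
    (h1.comp (continuous_id.prodMk continuous_const))

lemma pd_zero_of_notMem {g : ℝ × F → ℝ} (s : ℝ) (x : F)
    (h : s ∉ Prod.fst '' tsupport g) : pd g s x = 0 := by
  have : fderiv ℝ g (s, x) = 0 := by
    by_contra hne
    exact h ⟨(s, x), support_fderiv_subset ℝ (f := g) hne, rfl⟩
  simp [pd, this]

lemma pd_integrable {g : ℝ × F → ℝ} (hg : ContDiff ℝ (⊤ : ℕ∞) g)
    (hgc : HasCompactSupport g) (x : F) : Integrable fun s => pd g s x := by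
  refine (pd_cont hg x).integrable_of_hasCompactSupport ?_
  refine HasCompactSupport.intro (hgc.image continuous_fst) fun s hs => ?_
  exact pd_zero_of_notMem s x hs

lemma norm_pd_le {g : ℝ × F → ℝ} (s : ℝ) (x : F) :
    ‖pd g s x‖ ≤ ‖fderiv ℝ g (s, x)‖ := by
  refine ContinuousLinearMap.opNorm_le_bound _ (norm_nonneg _) fun u => ?_
  have : pd g s x u = fderiv ℝ g (s, x) (0, u) := rfl
  rw [this]
  calc ‖fderiv ℝ g (s, x) (0, u)‖ ≤ ‖fderiv ℝ g (s, x)‖ * ‖((0 : ℝ), u)‖ :=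
        ContinuousLinearMap.le_opNorm _ _
    _ = ‖fderiv ℝ g (s, x)‖ * ‖u‖ := by
        congr 1
        simp only [Prod.norm_def, norm_zero]
        exact max_eq_right (norm_nonneg _)

/-- Differentiation under the integral sign for compactly supported smooth integrands. -/
lemma hasFDerivAt_integral_slice {g : ℝ × F → ℝ} (hg : ContDiff ℝ (⊤ : ℕ∞) g)
    (hgc : HasCompactSupport g) {S : Set ℝ} (hS : MeasurableSet S) (x : F) :
    HasFDerivAt (fun y => ∫ s in S, g (s, y)) (∫ s in S, pd g s x) x := by
  obtain ⟨M, hM⟩ := (hgc.fderiv ℝ).exists_bound_of_continuous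
    ((hg.continuous_fderiv (by simp)))
  set K : Set ℝ := Prod.fst '' tsupport g with hK
  have hKc : IsCompact K := hgc.image continuous_fst
  have hKm : MeasurableSet K := hKc.isClosed.measurableSet
  refine hasFDerivAt_integral_of_dominated_of_fderiv_le
      (F := fun y s => g (s, y)) (F' := fun y s => pd g s y)
      (bound := K.indicator fun _ => M) (s := Metric.ball x 1) (Metric.ball_mem_nhds x one_pos) ?_ ?_ ?_ ?_ ?_ ?_
  · exact Eventually.of_forall fun y =>
      ((slice_cont hg.continuous y).aestronglyMeasurable).restrict
  · exact (slice_integrable hg.continuous hgc x).restrict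
  · exact ((pd_cont hg x).aestronglyMeasurable).restrict
  · refine Eventually.of_forall fun s => fun y _ => ?_
    show ‖pd g s y‖ ≤ K.indicator (fun _ => M) s
    by_cases hs : s ∈ K
    · rw [Set.indicator_of_mem hs]
      exact (norm_pd_le s y).trans (hM (s, y))
    · rw [Set.indicator_of_notMem hs, pd_zero_of_notMem s y hs]
      simp
  · refine (Integrable.restrict ?_)
    rw [integrable_indicator_iff hKm]
    exact integrableOn_const hKc.measure_lt_top.ne
  · exact Eventually.of_forall fun s => fun y _ => hasFDerivAt_slice hg s y

lemma hasDerivAt_slice_t {g : ℝ × F → ℝ} (hg : ContDiff ℝ (⊤ : ℕ∞) g) (x : F) (t : ℝ) :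
    HasDerivAt (fun s => g (s, x)) (fderiv ℝ g (t, x) (1, 0)) t :=
  (hg.differentiable (by simp) (t, x)).hasFDerivAt.comp_hasDerivAt t
    ((hasDerivAt_id t).prodMk (hasDerivAt_const t x))

lemma td_integrable {g : ℝ × F → ℝ} (hg : ContDiff ℝ (⊤ : ℕ∞) g)
    (hgc : HasCompactSupport g) (x : F) :
    Integrable fun s => fderiv ℝ g (s, x) ((1 : ℝ), (0 : F)) := by
  have h1 : Continuous (fderiv ℝ g) := hg.continuous_fderiv (by simp)
  refine Continuous.integrable_of_hasCompactSupport ?_ ?_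
  · exact (ContinuousLinearMap.apply ℝ ℝ ((1 : ℝ), (0 : F))).continuous.comp
      (h1.comp (continuous_id.prodMk continuous_const))
  · refine HasCompactSupport.intro (hgc.image continuous_fst) fun s hs => ?_
    have : fderiv ℝ g (s, x) = 0 := by
      by_contra hne
      exact hs ⟨(s, x), support_fderiv_subset ℝ (f := g) hne, rfl⟩
    simp [this]

/-- FTC tails : `∫_{Ici t} c' = - c t`. -/
lemma integral_Ici_deriv {c c' : ℝ → ℝ} (hder : ∀ s, HasDerivAt c (c' s) s)
    (hint : Integrable c') (hc : ∀ᶠ s in atTop, c s = 0) (t : ℝ) :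
    ∫ s in Set.Ici t, c' s = -c t := by
  rw [integral_Ici_eq_integral_Ioi,
    integral_Ioi_of_hasDerivAt_of_tendsto' (fun s _ => hder s) hint.integrableOn
      (tendsto_const_nhds.congr' (hc.mono fun s h => h.symm))]
  ring

lemma integral_Iic_deriv {c c' : ℝ → ℝ} (hder : ∀ s, HasDerivAt c (c' s) s)
    (hint : Integrable c') (hc : ∀ᶠ s in atBot, c s = 0) (t : ℝ) :
    ∫ s in Set.Iic t, c' s = c t := by
  rw [integral_Iic_of_hasDerivAt_of_tendsto' (fun s _ => hder s) hint.integrableOn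
      (tendsto_const_nhds.congr' (hc.mono fun s h => h.symm))]
  ring

lemma hasDerivAt_integral_Iic {h : ℝ → ℝ} (hh : Continuous h) (hint : Integrable h) (t : ℝ) :
    HasDerivAt (fun u => ∫ s in Set.Iic u, h s) (h t) t := by
  have key : (fun u => ∫ s in Set.Iic u, h s) =
      fun u => (∫ s in Set.Iic t, h s) + ∫ s in t..u, h s := by
    funext u
    rw [← intervalIntegral.integral_Iic_sub_Iic hint.integrableOn hint.integrableOn]
    ring
  rw [key]
  exact (intervalIntegral.integral_hasDerivAt_right hint.intervalIntegrable
    (hh.stronglyMeasurableAtFilter _ _) hh.continuousAt).const_add _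

lemma integral_Ici_eq_sub {h : ℝ → ℝ} (hint : Integrable h) (u : ℝ) :
    ∫ s in Set.Ici u, h s = (∫ s, h s) - ∫ s in Set.Iic u, h s := by
  rw [integral_Ici_eq_integral_Ioi,
    ← intervalIntegral.integral_Iic_add_Ioi hint.integrableOn hint.integrableOn]
  ring

lemma hasDerivAt_integral_Ici {h : ℝ → ℝ} (hh : Continuous h) (hint : Integrable h) (t : ℝ) :
    HasDerivAt (fun u => ∫ s in Set.Ici u, h s) (-(h t)) t := by
  have key : (fun u => ∫ s in Set.Ici u, h s) =
      fun u => (∫ s, h s) - ∫ s in Set.Iic u, h s := funext fun u => integral_Ici_eq_sub hint u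
  rw [key]
  exact (hasDerivAt_integral_Iic hh hint t).const_sub _

end Stmt8Aux

/-- Raw differential `k`-forms on a normed space. -/
abbrev RawForm (F : Type*) [NormedAddCommGroup F] [NormedSpace ℝ F] (k : ℕ) : Type _ :=
  F → (Fin k → F) → ℝ

/-- Exterior derivative of a raw form. -/
def extDerivRaw {F : Type*} [NormedAddCommGroup F] [NormedSpace ℝ F]
    {k : ℕ} (ω : RawForm F k) : RawForm F (k + 1) :=
  fun x v => ∑ i : Fin (k + 1),
    (-1 : ℝ) ^ (i : ℕ) *
      fderiv ℝ (fun y => ω y (fun j => v (i.succAbove j))) x (v i)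

/-- A smooth alternating family of forms, depending on a real parameter `t`
(the time-dependent forms on `M` representing forms on `ℝ × M`). -/
def SmoothAltFamily {F : Type*} [NormedAddCommGroup F] [NormedSpace ℝ F]
    {k : ℕ} (β : ℝ → RawForm F k) : Prop :=
  ∃ β' : ℝ × F → ContinuousMultilinearMap ℝ (fun _ : Fin k => F) ℝ,
    ContDiff ℝ (⊤ : ℕ∞) β' ∧
    (∀ q (v : Fin k → F) (i j : Fin k), i ≠ j → v i = v j → β' q v = 0) ∧
    ∀ t x v, β t x v = β' (t, x) v

/-- A form on `ℝ × M` of degree `k+2` decomposes uniquely as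
`ω = α + β ∧ dt`, encoded here as the pair of time-dependent forms
`α : ℝ → Ω^{k+2}(M)`, `β : ℝ → Ω^{k+1}(M)`; its differential is the pair
`(d_M α, ∂ₜα − d_M β)`.  With `∇β₀ = f dt ∧ β₀` (for a bump function `f` with
`∫ f = 1`) and `Δ(α + β∧dt) = ∫_{-∞}^∞ β(s) ds`:
* `Δ ∘ ∇ = ± Id`; and
* for every compactly supported *closed* `ω = α + β∧dt`, the explicit form
  `η = (∫_{-∞}^t f)(∫_t^∞ β) − (∫_t^∞ f)(∫_{-∞}^t β)` (a pair `(η, 0)`)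
  satisfies `dη = (∇∘Δ)(ω) − ω`,
so `∇` and `Δ` are inverse quasi-isomorphisms on compactly supported cohomology. -/
theorem stmt8
    {F : Type*} [NormedAddCommGroup F] [NormedSpace ℝ F]
    (f : ℝ → ℝ) (hf : Continuous f) (hfc : HasCompactSupport f)
    (hf1 : ∫ s : ℝ, f s = 1) {k : ℕ} :
    -- `Δ ∘ ∇ = ± Id` : for any compactly supported form `β₀` on `M`,
    (∀ β₀ : RawForm F (k + 1), ∀ x v, (∫ s : ℝ, f s * β₀ x v) = β₀ x v) ∧
    -- the explicit primitive for closed compactly supported `ω = α + β ∧ dt` :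
    (∀ (α : ℝ → RawForm F (k + 2)) (β : ℝ → RawForm F (k + 1)),
      SmoothAltFamily α → SmoothAltFamily β →
      -- compact support in `ℝ × M`
      (∃ C : Set (ℝ × F), IsCompact C ∧ ∀ t x, (t, x) ∉ C →
        (∀ v, α t x v = 0) ∧ ∀ v, β t x v = 0) →
      -- `dω = 0`, i.e. `d_M α = 0` and `∂ₜ α = d_M β`
      (∀ t, extDerivRaw (α t) = 0) →
      (∀ t x v, deriv (fun s => α s x v) t = extDerivRaw (β t) x v) →
      -- then with `η` as above (a form with no `dt`-component),
      let η : ℝ → RawForm F (k + 1) := fun t x v =>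
        (∫ s in Set.Iic t, f s) * (∫ s in Set.Ici t, β s x v) -
        (∫ s in Set.Ici t, f s) * (∫ s in Set.Iic t, β s x v)
      -- `dη = ∇Δω − ω` componentwise :
      (∀ t x v, extDerivRaw (η t) x v = - α t x v) ∧
      (∀ t x v, deriv (fun s => η s x v) t =
        f t * (∫ s : ℝ, β s x v) - β t x v)) := by
  constructor
  · intro β₀ x v
    rw [integral_mul_const, hf1, one_mul]
  · intro α β hα hβ hsupp hclosed hdα η
    obtain ⟨α', hα's, -, hαeq⟩ := hα
    obtain ⟨β', hβ's, -, hβeq⟩ := hβ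
    obtain ⟨C, hCc, hCsupp⟩ := hsupp
    clear hclosed
    have hfint : Integrable f := hf.integrable_of_hasCompactSupport hfc
    have hACf : ∀ t : ℝ, (∫ s in Set.Iic t, f s) + (∫ s in Set.Ici t, f s) = 1 := by
      intro t
      rw [integral_Ici_eq_integral_Ioi,
        intervalIntegral.integral_Iic_add_Ioi hfint.integrableOn hfint.integrableOn, hf1]
    -- compact supports of the representing families
    have hβ'c : HasCompactSupport β' := by
      refine HasCompactSupport.intro hCc fun q hq => ?_
      ext w
      have h0 := (hCsupp q.1 q.2 (by simpa using hq)).2 w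
      rw [hβeq] at h0
      simpa using h0
    have hα'c : HasCompactSupport α' := by
      refine HasCompactSupport.intro hCc fun q hq => ?_
      ext w
      have h0 := (hCsupp q.1 q.2 (by simpa using hq)).1 w
      rw [hαeq] at h0
      simpa using h0
    have comp_hcs : ∀ {n : ℕ} (γ' : ℝ × F → ContinuousMultilinearMap ℝ (fun _ : Fin n => F) ℝ),
        HasCompactSupport γ' → ∀ w : Fin n → F, HasCompactSupport fun q => γ' q w := by
      intro n γ' hγ w
      have := hγ.comp_left (g := fun m => m w) rfl
      exact this
    have hb_smooth : ∀ w : Fin (k + 1) → F, ContDiff ℝ (⊤ : ℕ∞) fun q => β' q w := fun w =>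
      (ContinuousMultilinearMap.apply ℝ (fun _ : Fin (k + 1) => F) ℝ w).contDiff.comp hβ's
    have hb_hcs : ∀ w : Fin (k + 1) → F, HasCompactSupport fun q => β' q w := fun w =>
      comp_hcs β' hβ'c w
    have ha_smooth : ∀ v : Fin (k + 2) → F, ContDiff ℝ (⊤ : ℕ∞) fun q => α' q v := fun v =>
      (ContinuousMultilinearMap.apply ℝ (fun _ : Fin (k + 2) => F) ℝ v).contDiff.comp hα's
    have ha_hcs : ∀ v : Fin (k + 2) → F, HasCompactSupport fun q => α' q v := fun v =>
      comp_hcs α' hα'c v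
    -- vanishing of α at ±∞
    have hvan_top : ∀ (x : F) (v : Fin (k + 2) → F), ∀ᶠ s in atTop, α s x v = 0 := by
      intro x v
      obtain ⟨T, hT⟩ := (hCc.image continuous_fst).bddAbove
      filter_upwards [eventually_gt_atTop T] with s hs
      refine (hCsupp s x fun hmem => ?_).1 v
      exact absurd (hT ⟨(s, x), hmem, rfl⟩) (not_le.2 hs)
    have hvan_bot : ∀ (x : F) (v : Fin (k + 2) → F), ∀ᶠ s in atBot, α s x v = 0 := by
      intro x v
      obtain ⟨T, hT⟩ := (hCc.image continuous_fst).bddBelow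
      filter_upwards [eventually_lt_atBot T] with s hs
      refine (hCsupp s x fun hmem => ?_).1 v
      exact absurd (hT ⟨(s, x), hmem, rfl⟩) (not_le.2 hs)
    -- FTC facts
    have hfd_eq : ∀ (x : F) (v : Fin (k + 2) → F) (s : ℝ),
        extDerivRaw (β s) x v = fderiv ℝ (fun q => α' q v) (s, x) (1, 0) := by
      intro x v s
      have h1 : HasDerivAt (fun u => (fun q => α' q v) (u, x))
          (fderiv ℝ (fun q => α' q v) (s, x) (1, 0)) s :=
        Stmt8Aux.hasDerivAt_slice_t (ha_smooth v) x s
      have h2 : (fun u => α u x v) = fun u => α' (u, x) v := funext fun u => hαeq u x v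
      rw [← h2] at h1
      exact (hdα s x v).symm.trans h1.deriv
    have hderα : ∀ (x : F) (v : Fin (k + 2) → F) (s : ℝ),
        HasDerivAt (fun u => α u x v) (extDerivRaw (β s) x v) s := by
      intro x v s
      have h1 : HasDerivAt (fun u => (fun q => α' q v) (u, x))
          (fderiv ℝ (fun q => α' q v) (s, x) (1, 0)) s :=
        Stmt8Aux.hasDerivAt_slice_t (ha_smooth v) x s
      have h2 : (fun u => α u x v) = fun u => α' (u, x) v := funext fun u => hαeq u x v
      rw [← h2] at h1
      rw [hfd_eq x v s]
      exact h1
    have hintα : ∀ (x : F) (v : Fin (k + 2) → F),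
        Integrable fun s => extDerivRaw (β s) x v := by
      intro x v
      have h : (fun s => extDerivRaw (β s) x v) =
          fun s => fderiv ℝ (fun q => α' q v) (s, x) (1, 0) := funext fun s => hfd_eq x v s
      rw [h]
      exact Stmt8Aux.td_integrable (ha_smooth v) (ha_hcs v) x
    have hIciFTC : ∀ (t : ℝ) (x : F) (v : Fin (k + 2) → F),
        ∫ s in Set.Ici t, extDerivRaw (β s) x v = -α t x v :=
      fun t x v => Stmt8Aux.integral_Ici_deriv (hderα x v) (hintα x v) (hvan_top x v) t
    have hIicFTC : ∀ (t : ℝ) (x : F) (v : Fin (k + 2) → F),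
        ∫ s in Set.Iic t, extDerivRaw (β s) x v = α t x v :=
      fun t x v => Stmt8Aux.integral_Iic_deriv (hderα x v) (hintα x v) (hvan_bot x v) t
    refine ⟨?_, ?_⟩
    · -- claim 1 : dη (tangential part) = -α
      intro t x v
      -- the i-th summand integrand
      set D : Fin (k + 1 + 1) → ℝ → ℝ :=
        fun i s => Stmt8Aux.pd (fun q => β' q fun j => v (i.succAbove j)) s x (v i) with hD
      have hD_int : ∀ i, Integrable (D i) := fun i =>
        (ContinuousLinearMap.apply ℝ ℝ (v i)).integrable_comp
          (Stmt8Aux.pd_integrable (hb_smooth _) (hb_hcs _) x)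
      have hDsum : ∀ s : ℝ, (∑ i : Fin (k + 1 + 1), (-1 : ℝ) ^ (i : ℕ) * D i s) =
          extDerivRaw (β s) x v := by
        intro s
        simp only [extDerivRaw]
        refine Finset.sum_congr rfl fun i _ => ?_
        congr 1
        have h2 : (fun y => β s y fun j => v (i.succAbove j)) =
            fun y => (fun q => β' q fun j => v (i.succAbove j)) (s, y) :=
          funext fun y => hβeq s y _
        rw [h2, (Stmt8Aux.hasFDerivAt_slice (hb_smooth _) s x).fderiv]
      have hswap : ∀ S : Set ℝ, MeasurableSet S →
          (∑ i : Fin (k + 1 + 1), (-1 : ℝ) ^ (i : ℕ) * ∫ s in S, D i s) =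
            ∫ s in S, extDerivRaw (β s) x v := by
        intro S hS
        have h1 : ∀ i : Fin (k + 1 + 1),
            (-1 : ℝ) ^ (i : ℕ) * ∫ s in S, D i s = ∫ s in S, (-1 : ℝ) ^ (i : ℕ) * D i s :=
          fun i => (integral_const_mul _ _).symm
        rw [Finset.sum_congr rfl fun i _ => h1 i,
          ← integral_finset_sum _ fun i _ => ((hD_int i).restrict).const_mul _]
        exact setIntegral_congr_fun hS fun s _ => hDsum s
      have hkey : ∀ (w : Fin (k + 1) → F) (u : F),
          fderiv ℝ (fun y => η t y w) x u =
            (∫ s in Set.Iic t, f s) *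
              (∫ s in Set.Ici t, Stmt8Aux.pd (fun q => β' q w) s x u) -
            (∫ s in Set.Ici t, f s) *
              (∫ s in Set.Iic t, Stmt8Aux.pd (fun q => β' q w) s x u) := by
        intro w u
        have e1 : (fun y => η t y w) = fun y =>
            (∫ s in Set.Iic t, f s) * (∫ s in Set.Ici t, (fun q => β' q w) (s, y)) -
            (∫ s in Set.Ici t, f s) * (∫ s in Set.Iic t, (fun q => β' q w) (s, y)) := by
          funext y
          show (∫ s in Set.Iic t, f s) * (∫ s in Set.Ici t, β s y w) -
               (∫ s in Set.Ici t, f s) * (∫ s in Set.Iic t, β s y w) = _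
          simp only [hβeq]
        have hc1 := ((Stmt8Aux.hasFDerivAt_integral_slice (hb_smooth w) (hb_hcs w)
          (measurableSet_Ici (a := t)) x).const_mul (∫ s in Set.Iic t, f s)).sub
          ((Stmt8Aux.hasFDerivAt_integral_slice (hb_smooth w) (hb_hcs w)
            (measurableSet_Iic (a := t)) x).const_mul (∫ s in Set.Ici t, f s))
        have hc1' : HasFDerivAt (fun y =>
            (∫ s in Set.Iic t, f s) * (∫ s in Set.Ici t, (fun q => β' q w) (s, y)) -
            (∫ s in Set.Ici t, f s) * (∫ s in Set.Iic t, (fun q => β' q w) (s, y))) _ x := hc1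
        rw [e1, hc1'.fderiv, ContinuousLinearMap.sub_apply, ContinuousLinearMap.smul_apply,
          ContinuousLinearMap.smul_apply, smul_eq_mul, smul_eq_mul,
          ContinuousLinearMap.integral_apply
            ((Stmt8Aux.pd_integrable (hb_smooth w) (hb_hcs w) x).restrict) u,
          ContinuousLinearMap.integral_apply
            ((Stmt8Aux.pd_integrable (hb_smooth w) (hb_hcs w) x).restrict) u]
      have main : extDerivRaw (η t) x v =
          (∫ s in Set.Iic t, f s) * (∫ s in Set.Ici t, extDerivRaw (β s) x v) -
          (∫ s in Set.Ici t, f s) * (∫ s in Set.Iic t, extDerivRaw (β s) x v) := by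
        rw [← hswap (Set.Ici t) measurableSet_Ici, ← hswap (Set.Iic t) measurableSet_Iic,
          Finset.mul_sum, Finset.mul_sum, ← Finset.sum_sub_distrib]
        simp only [extDerivRaw]
        refine Finset.sum_congr rfl fun i _ => ?_
        rw [hkey]
        simp only [hD]
        ring
      rw [main, hIciFTC t x v, hIicFTC t x v]
      linear_combination (-(α t x v)) * hACf t
    · -- claim 2 : the dt-part of dη
      intro t x v
      set g0 : ℝ → ℝ := fun s => β s x v with hg0
      have hg0eq : g0 = fun s => (fun q => β' q v) (s, x) := funext fun s => hβeq s x v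
      have hg0c : Continuous g0 := by
        rw [hg0eq]; exact Stmt8Aux.slice_cont (hb_smooth v).continuous x
      have hg0int : Integrable g0 := by
        rw [hg0eq]
        exact Stmt8Aux.slice_integrable (hb_smooth v).continuous (hb_hcs v) x
      have hA := Stmt8Aux.hasDerivAt_integral_Iic hf hfint t
      have hB := Stmt8Aux.hasDerivAt_integral_Ici hg0c hg0int t
      have hC := Stmt8Aux.hasDerivAt_integral_Ici hf hfint t
      have hDd := Stmt8Aux.hasDerivAt_integral_Iic hg0c hg0int t
      have h2 : HasDerivAt (fun s => η s x v)
          (f t * (∫ s in Set.Ici t, g0 s) + (∫ s in Set.Iic t, f s) * -g0 t -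
            (-f t * (∫ s in Set.Iic t, g0 s) + (∫ s in Set.Ici t, f s) * g0 t)) t :=
        (hA.mul hB).sub (hC.mul hDd)
      rw [h2.deriv]
      have hsplit : (∫ s in Set.Iic t, g0 s) + (∫ s in Set.Ici t, g0 s) = ∫ s, g0 s := by
        rw [integral_Ici_eq_integral_Ioi,
          intervalIntegral.integral_Iic_add_Ioi hg0int.integrableOn hg0int.integrableOn]
      show _ = f t * (∫ s, g0 s) - g0 t
      linear_combination f t * hsplit - g0 t * hACf t
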